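/- Theorem 4.5, case B3. In addition to the common setup, assume b11 = b21, σ11 = σ21, b12 = b22, σ12 = σ22, and K₁ := K_{11} = K_{21} > K_{12} = K_{22} =: K₂; assume c12 > 0, c21 > 0, χ12 < 0, χ21 > 0 and χ12 + χ21 > 0 (Condition B3). Then the quadruple v11(x) = K₂·x^γ + χ12, v12(x) = K₂·x^γ, v21(x) = K₂·x^γ + χ12, v22(x) = K₂·x^γ solves the QVI system at every x > 0. -/

import Mathlib

/-! The coefficients depend only on the second regime index, and every candidate is `K₂ x^γ`
plus a constant, for which `r (K x^γ) - L_j (K x^γ) - x^γ = (K D_j - 1) x^γ` with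
`D_j = r - b_j γ + σ_j² γ (1 - γ) / 2 = 1 / K_j`. In the regimes `(·,2)` this vanishes since
`K₂ D₂ = 1`; in the regimes `(·,1)` the residual `(K₂ D₁ - 1) x^γ + r χ12` is negative since
`K₂ < K₁ = 1 / D₁` and `χ12 < 0`, so there the switch with cost `χ12` may be active. The signs
of `c12`, `c21` and `χ12 + χ21` give the remaining obstacle inequalities. -/

/-- Generator of a one-dimensional geometric Brownian motion with drift `b` and
volatility `σ`: `(L v)(x) = (1/2)σ²x²v''(x) + b x v'(x)`. -/
noncomputable def Lop (b σ : ℝ) (v : ℝ → ℝ) (x : ℝ) : ℝ :=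
  (1/2) * σ^2 * x^2 * deriv (deriv v) x + b * x * deriv v x

/-- The quadruple `(v11, v12, v21, v22)` solves the Isaacs system of
quasi-variational inequalities at the point `x`, with profit `f(x) = x^γ`. -/
def solvesQVI (r γ c12 c21 χ12 χ21 b11 σ11 b12 σ12 b21 σ21 b22 σ22 : ℝ)
    (v11 v12 v21 v22 : ℝ → ℝ) (x : ℝ) : Prop :=
  max (min (r * v11 x - Lop b11 σ11 v11 x - x ^ γ) (v11 x - (v21 x - c12)))
      (v11 x - (v12 x + χ12)) = 0 ∧
  max (min (r * v12 x - Lop b12 σ12 v12 x - x ^ γ) (v12 x - (v22 x - c12)))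
      (v12 x - (v11 x + χ21)) = 0 ∧
  max (min (r * v21 x - Lop b21 σ21 v21 x - x ^ γ) (v21 x - (v11 x - c21)))
      (v21 x - (v22 x + χ12)) = 0 ∧
  max (min (r * v22 x - Lop b22 σ22 v22 x - x ^ γ) (v22 x - (v12 x - c21)))
      (v22 x - (v21 x + χ21)) = 0

theorem Lop_add_const (b σ c : ℝ) (v : ℝ → ℝ) (x : ℝ) :
    Lop b σ (fun y => v y + c) x = Lop b σ v x := by
  simp only [Lop, deriv_add_const']

theorem Lop_const_mul_rpow (b σ K γ : ℝ) {x : ℝ} (hx : 0 < x) :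
    Lop b σ (fun y => K * y ^ γ) x = (b * γ + (1/2) * σ^2 * γ * (γ - 1)) * K * x ^ γ := by
  simp only [Lop, deriv_const_mul_field', deriv_const_mul_field,
    Real.deriv_rpow_const, Real.rpow_sub_one hx.ne']
  field_simp
  ring

theorem sub_Lop_const_mul_rpow (r b σ K γ : ℝ) {x : ℝ} (hx : 0 < x) :
    r * (K * x ^ γ) - Lop b σ (fun y => K * y ^ γ) x - x ^ γ
      = (K * (r - b * γ + (1/2) * σ^2 * γ * (1 - γ)) - 1) * x ^ γ := by
  rw [Lop_const_mul_rpow b σ K γ hx]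
  ring

theorem max_min_eq_zero_of_nonpos_of_eq_zero {α : Type*} [LinearOrder α] [Zero α] {a b c : α}
    (ha : a ≤ 0) (hc : c = 0) : max (min a b) c = 0 := by
  rw [hc, max_eq_right (min_le_of_left_le ha)]

theorem max_min_eq_zero_of_eq_zero {α : Type*} [LinearOrder α] [Zero α] {a b c : α}
    (ha : a = 0) (hb : 0 ≤ b) (hc : c ≤ 0) : max (min a b) c = 0 := by
  rw [ha, min_eq_left hb, max_eq_left hc]

theorem thm4_5_B3_general
    (r γ c12 c21 χ12 χ21 : ℝ)
    (b11 σ11 b12 σ12 b21 σ21 b22 σ22 : ℝ)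
    (K11 K12 : ℝ)
    (hr : 0 < r)
    (hd11 : 0 < r - b11*γ + (1/2)*σ11^2*γ*(1-γ))
    (hd12 : 0 < r - b12*γ + (1/2)*σ12^2*γ*(1-γ))
    (hK11 : K11 = 1/(r - b11*γ + (1/2)*σ11^2*γ*(1-γ)))
    (hK12 : K12 = 1/(r - b12*γ + (1/2)*σ12^2*γ*(1-γ)))
    (heqb21 : b21 = b11) (heqσ21 : σ21 = σ11)
    (heqb22 : b22 = b12) (heqσ22 : σ22 = σ12)
    (K₁ K₂ : ℝ) (hK₁ : K₁ = K11) (hK₂ : K₂ = K12)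
    (hKgt : K₂ < K₁)
    (hc12 : 0 < c12) (hc21 : 0 < c21) (hχ12 : χ12 < 0)
    (hχsum : 0 < χ12 + χ21)
    :
    ∀ x : ℝ, 0 < x →
      solvesQVI r γ c12 c21 χ12 χ21 b11 σ11 b12 σ12 b21 σ21 b22 σ22
        (fun y => K₂ * y ^ γ + χ12)
        (fun y => K₂ * y ^ γ)
        (fun y => K₂ * y ^ γ + χ12)
        (fun y => K₂ * y ^ γ) x := by
  intro x hx
  subst b21 σ21 b22 σ22
  have hxγ : 0 < x ^ γ := Real.rpow_pos_of_pos hx γ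
  have hK₂D₂ : K₂ * (r - b12*γ + (1/2)*σ12^2*γ*(1-γ)) = 1 := by
    rw [hK₂, hK12, one_div, inv_mul_cancel₀ hd12.ne']
  have hK₂D₁ : K₂ * (r - b11*γ + (1/2)*σ11^2*γ*(1-γ)) < 1 :=
    (lt_div_iff₀ hd11).mp (by rwa [← hK11, ← hK₁])
  have hHJB₁ :
      r * (K₂ * x ^ γ + χ12) - Lop b11 σ11 (fun y => K₂ * y ^ γ + χ12) x - x ^ γ ≤ 0 := by
    have hres := sub_Lop_const_mul_rpow r b11 σ11 K₂ γ hx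
    rw [Lop_add_const]
    linarith [mul_lt_mul_of_pos_right hK₂D₁ hxγ, mul_neg_of_pos_of_neg hr hχ12]
  have hHJB₂ : r * (K₂ * x ^ γ) - Lop b12 σ12 (fun y => K₂ * y ^ γ) x - x ^ γ = 0 := by
    rw [sub_Lop_const_mul_rpow r b12 σ12 K₂ γ hx, hK₂D₂, sub_self, zero_mul]
  refine ⟨?_, ?_, ?_, ?_⟩
  · exact max_min_eq_zero_of_nonpos_of_eq_zero hHJB₁ (by ring)
  · exact max_min_eq_zero_of_eq_zero hHJB₂ (by linarith) (by linarith)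
  · exact max_min_eq_zero_of_nonpos_of_eq_zero hHJB₁ (by ring)
  · exact max_min_eq_zero_of_eq_zero hHJB₂ (by linarith) (by linarith)

theorem thm4_5_B3
    (r γ c12 c21 χ12 χ21 : ℝ)
    (b11 σ11 b12 σ12 b21 σ21 b22 σ22 : ℝ)
    (K11 K12 K21 K22 : ℝ)
    (hr : 0 < r) (hγ0 : 0 < γ) (hγ1 : γ < 1)
    (hσ11 : 0 < σ11) (hσ12 : 0 < σ12) (hσ21 : 0 < σ21) (hσ22 : 0 < σ22)
    (hd11 : 0 < r - b11*γ + (1/2)*σ11^2*γ*(1-γ))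
    (hd12 : 0 < r - b12*γ + (1/2)*σ12^2*γ*(1-γ))
    (hd21 : 0 < r - b21*γ + (1/2)*σ21^2*γ*(1-γ))
    (hd22 : 0 < r - b22*γ + (1/2)*σ22^2*γ*(1-γ))
    (hrb11 : b11 < r) (hrb12 : b12 < r) (hrb21 : b21 < r) (hrb22 : b22 < r)
    (hK11 : K11 = 1/(r - b11*γ + (1/2)*σ11^2*γ*(1-γ)))
    (hK12 : K12 = 1/(r - b12*γ + (1/2)*σ12^2*γ*(1-γ)))
    (hK21 : K21 = 1/(r - b21*γ + (1/2)*σ21^2*γ*(1-γ)))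
    (hK22 : K22 = 1/(r - b22*γ + (1/2)*σ22^2*γ*(1-γ)))
    (heqb21 : b21 = b11) (heqσ21 : σ21 = σ11)
    (heqb22 : b22 = b12) (heqσ22 : σ22 = σ12)
    (K₁ K₂ : ℝ) (hK₁ : K₁ = K11) (hK₂ : K₂ = K12)
    (hKgt : K₂ < K₁)
    (hc12 : 0 < c12) (hc21 : 0 < c21) (hχ12 : χ12 < 0) (hχ21 : 0 < χ21)
    (hχsum : 0 < χ12 + χ21)
    :
    ∀ x : ℝ, 0 < x →
      solvesQVI r γ c12 c21 χ12 χ21 b11 σ11 b12 σ12 b21 σ21 b22 σ22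
        (fun y => K₂ * y ^ γ + χ12)
        (fun y => K₂ * y ^ γ)
        (fun y => K₂ * y ^ γ + χ12)
        (fun y => K₂ * y ^ γ) x :=
  thm4_5_B3_general r γ c12 c21 χ12 χ21 b11 σ11 b12 σ12 b21 σ21 b22 σ22 K11 K12 hr hd11 hd12 hK11
    hK12 heqb21 heqσ21 heqb22 heqσ22 K₁ K₂ hK₁ hK₂ hKgt hc12 hc21 hχ12 hχsum
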